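/- arXiv:2410.18613 — 3 statements merged into one kernel-verified Lean document; each statement's English description precedes it below -/
import Mathlib

section
/- For any x ∈ ℝ^N, the Frobenius norm of the Jacobian matrix of the softmax function at x is at most 2; i.e., ∑_{j,k} (∂σ_j/∂x_k)² ≤ 4. -/
/-! The Jacobian of softmax at `x` is `p_j (δ_jk - p_k)` with `p = σ x` a probability vector.
Row `j` has squared norm `p_j² (1 - 2 p_j + ∑ p_k²) ≤ 2 p_j²`, and `∑ p_j² ≤ ∑ p_j ≤ 1`, so the
squared Frobenius norm is even at most `2`. -/

noncomputable def softmaxFun {N : ℕ} (x : Fin N → ℝ) : Fin N → ℝ :=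
  fun j => Real.exp (x j) / ∑ k, Real.exp (x k)

open ContinuousLinearMap

section ProbabilityVector

variable {ι : Type*} [Fintype ι] {p : ι → ℝ}

theorem sum_sq_le_one_of_sum_le_one (hp : ∀ i, 0 ≤ p i) (hsum : ∑ i, p i ≤ 1) :
    ∑ i, p i ^ 2 ≤ 1 := by
  have hle : ∀ i, p i ≤ 1 := fun i =>
    (Finset.single_le_sum (fun k _ => hp k) (Finset.mem_univ i)).trans hsum
  calc ∑ i, p i ^ 2 ≤ ∑ i, p i :=
        Finset.sum_le_sum fun i _ => by nlinarith [hp i, hle i]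
    _ ≤ 1 := hsum

theorem sum_sq_single_sub [DecidableEq ι] (j : ι) :
    ∑ k, ((Pi.single j 1 : ι → ℝ) k - p k) ^ 2 = 1 - 2 * p j + ∑ k, p k ^ 2 := by
  simp only [sub_sq, Finset.sum_add_distrib, Finset.sum_sub_distrib]
  simp [Pi.single_apply]

theorem sum_sq_mul_single_sub_le_two [DecidableEq ι] (hp : ∀ i, 0 ≤ p i) (hsum : ∑ i, p i ≤ 1) :
    ∑ j, ∑ k, (p j * ((Pi.single j 1 : ι → ℝ) k - p k)) ^ 2 ≤ 2 := by
  have hsq := sum_sq_le_one_of_sum_le_one hp hsum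
  calc ∑ j, ∑ k, (p j * ((Pi.single j 1 : ι → ℝ) k - p k)) ^ 2
      = ∑ j, p j ^ 2 * (1 - 2 * p j + ∑ k, p k ^ 2) := by
        simp only [mul_pow, ← Finset.mul_sum, sum_sq_single_sub]
    _ ≤ ∑ j, p j ^ 2 * 2 :=
        Finset.sum_le_sum fun j _ => by gcongr; linarith [hp j]
    _ ≤ 2 := by rw [← Finset.sum_mul]; nlinarith

end ProbabilityVector

variable {N : ℕ}

theorem sum_softmaxFun_le_one (x : Fin N → ℝ) : ∑ j, softmaxFun x j ≤ 1 := by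
  simp only [softmaxFun, ← Finset.sum_div]
  exact div_self_le_one _

theorem softmaxFun_nonneg (x : Fin N → ℝ) (j : Fin N) : 0 ≤ softmaxFun x j := by
  unfold softmaxFun; positivity

theorem hasFDerivAt_softmaxFun_apply (x : Fin N → ℝ) (j : Fin N) :
    HasFDerivAt (fun y => softmaxFun y j)
      (softmaxFun x j • ((proj j : (Fin N → ℝ) →L[ℝ] ℝ) -
        ∑ i, softmaxFun x i • (proj i : (Fin N → ℝ) →L[ℝ] ℝ))) x := by
  have hS : ∑ i, Real.exp (x i) ≠ 0 :=
    (Finset.sum_pos (fun i _ ↦ Real.exp_pos (x i)) ⟨j, Finset.mem_univ j⟩).ne'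
  have hsum : HasFDerivAt (fun y : Fin N → ℝ ↦ ∑ i, Real.exp (y i))
      (∑ i, Real.exp (x i) • (proj i : (Fin N → ℝ) →L[ℝ] ℝ)) x :=
    .fun_sum fun i _ ↦ (hasFDerivAt_apply i x).exp
  have h := (hasFDerivAt_apply j x).exp.mul ((hasDerivAt_inv hS).comp_hasFDerivAt x hsum)
  simp only [softmaxFun, div_eq_mul_inv]
  refine h.congr_fderiv ?_
  ext v
  simp only [add_apply, smul_apply, sub_apply, sum_apply, proj_apply, Function.comp_apply,
    smul_eq_mul, mul_right_comm _ (∑ i, Real.exp (x i))⁻¹, ← Finset.sum_mul]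
  field_simp
  ring

theorem fderiv_softmaxFun_apply_single (x : Fin N → ℝ) (j k : Fin N) :
    fderiv ℝ (fun y => softmaxFun y j) x (Pi.single k 1)
      = softmaxFun x j * ((Pi.single j 1 : Fin N → ℝ) k - softmaxFun x k) := by
  rw [(hasFDerivAt_softmaxFun_apply x j).fderiv]
  simp [Pi.single_apply, eq_comm]

theorem softmax_jacobian_frobenius_le_two (N : ℕ) (x : Fin N → ℝ) :
    ∑ j, ∑ k, (fderiv ℝ (fun y : Fin N → ℝ => softmaxFun y j) x (Pi.single k 1)) ^ 2
      ≤ 4 := by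
  simp only [fderiv_softmaxFun_apply_single]
  linarith [sum_sq_mul_single_sub_le_two (softmaxFun_nonneg x) (sum_softmaxFun_le_one x)]
end

section
/- For the matrix softmax map on ℝ^{N×N}, the Frobenius norm of its Jacobian (the gradient linear map from ℝ^{N×N} to ℝ^{N×N}) at any matrix A satisfies ‖∇softmax(A)‖_F ≤ 2√N. -/
noncomputable def matrixSoftmax {N : ℕ} (A : Fin N → Fin N → ℝ) : Fin N → Fin N → ℝ :=
  fun i j => Real.exp (A i j) / ∑ k, Real.exp (A i k)

/-! The Jacobian is block diagonal: row `i` of the output depends only on row `i` of the input,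
through the vector softmax, whose Jacobian at `x` is `diag p - p pᵀ` with `p = softmax x` a
probability vector. Since `(δⱼₗ - pₗ)² ≤ δⱼₗ + pₗ`, each block has squared Frobenius norm at most
`∑ⱼ 2 pⱼ² ≤ 2`, so the full Jacobian has squared norm at most `2N ≤ 4N`. -/

open Finset ContinuousLinearMap

variable {ι : Type*}

def softmaxJacobian [DecidableEq ι] (p : ι → ℝ) : Matrix ι ι ℝ :=
  Matrix.diagonal p - Matrix.vecMulVec p p

theorem softmaxJacobian_apply [DecidableEq ι] (p : ι → ℝ) (j l : ι) :
    softmaxJacobian p j l = p j * ((if j = l then 1 else 0) - p l) := by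
  by_cases h : j = l
  · simp [softmaxJacobian, h, Matrix.vecMulVec_apply, mul_sub]
  · simp [softmaxJacobian, h, Matrix.vecMulVec_apply]

variable [Fintype ι]

noncomputable def softmax (x : ι → ℝ) : ι → ℝ :=
  fun j => Real.exp (x j) / ∑ k, Real.exp (x k)

theorem matrixSoftmax_apply {N : ℕ} (A : Fin N → Fin N → ℝ) (i : Fin N) :
    matrixSoftmax A i = softmax (A i) := rfl

section Nonempty

variable [Nonempty ι]

theorem sum_exp_pos (x : ι → ℝ) : 0 < ∑ k, Real.exp (x k) :=
  Finset.sum_pos (fun _ _ => Real.exp_pos _) univ_nonempty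

theorem softmax_nonneg (x : ι → ℝ) (j : ι) : 0 ≤ softmax x j :=
  div_nonneg (Real.exp_pos _).le (sum_exp_pos x).le

theorem sum_softmax (x : ι → ℝ) : ∑ j, softmax x j = 1 := by
  simp only [softmax, ← Finset.sum_div]
  exact div_self (sum_exp_pos x).ne'

theorem hasFDerivAt_softmax_apply (x : ι → ℝ) (j : ι) :
    HasFDerivAt (fun y => softmax y j)
      (softmax x j • (proj (R := ℝ) (φ := fun _ : ι => ℝ) j - ∑ l, softmax x l • proj l)) x := by
  have hexp : ∀ l, HasFDerivAt (fun y : ι → ℝ => Real.exp (y l))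
      (Real.exp (x l) • proj (R := ℝ) (φ := fun _ : ι => ℝ) l) x := fun l =>
    (hasFDerivAt_apply l x).exp
  have hsum : HasFDerivAt (fun y : ι → ℝ => ∑ l, Real.exp (y l))
      (∑ l, Real.exp (x l) • proj (R := ℝ) (φ := fun _ : ι => ℝ) l) x :=
    HasFDerivAt.fun_sum fun l _ => hexp l
  have hZ := (hasDerivAt_inv (sum_exp_pos x).ne').comp_hasFDerivAt x hsum
  refine ((hexp j).mul hZ).congr_fderiv ?_
  ext v
  have hZ₀ := (sum_exp_pos x).ne'
  simp only [neg_smul, smul_neg, Function.comp_apply, add_apply, neg_apply, smul_apply, _root_.sum_apply,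
    proj_apply, smul_eq_mul, softmax, sub_apply, div_mul_eq_mul_div, ← sum_div]
  field_simp
  ring

theorem fderiv_softmax_apply_single [DecidableEq ι] (x : ι → ℝ) (j l : ι) :
    fderiv ℝ (fun y => softmax y j) x (Pi.single l 1) = softmaxJacobian (softmax x) j l := by
  simp [(hasFDerivAt_softmax_apply x j).fderiv, Pi.single_apply, softmaxJacobian_apply]

end Nonempty

theorem sum_sq_softmaxJacobian_le_two [DecidableEq ι] {p : ι → ℝ} (hp₀ : ∀ j, 0 ≤ p j)
    (hp₁ : ∑ j, p j = 1) :
    ∑ j, ∑ l, softmaxJacobian p j l ^ 2 ≤ 2 := by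
  have hp_le : ∀ j, p j ≤ 1 := fun j =>
    hp₁ ▸ single_le_sum (fun l _ => hp₀ l) (mem_univ j)
  have hterm : ∀ j l, ((if j = l then 1 else 0) - p l) ^ 2 ≤ (if j = l then 1 else 0) + p l := by
    intro j l
    split_ifs <;> nlinarith [hp₀ l, hp_le l]
  calc ∑ j, ∑ l, softmaxJacobian p j l ^ 2
      ≤ ∑ j, ∑ l, p j ^ 2 * ((if j = l then 1 else 0) + p l) := by
        gcongr with j _ l _
        rw [softmaxJacobian_apply, mul_pow]
        exact mul_le_mul_of_nonneg_left (hterm j l) (sq_nonneg _)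
    _ = ∑ j, 2 * p j ^ 2 := by
        refine sum_congr rfl fun j _ => ?_
        rw [← mul_sum, sum_add_distrib, sum_ite_eq, if_pos (mem_univ j), hp₁]
        ring
    _ ≤ ∑ j, 2 * p j := by
        gcongr with j _
        nlinarith [hp₀ j, hp_le j]
    _ = 2 := by rw [← mul_sum, hp₁, mul_one]

theorem fderiv_comp_eval_apply_single {𝕜 E F : Type*} [NontriviallyNormedField 𝕜]
    [NormedAddCommGroup E] [NormedSpace 𝕜 E] [NormedAddCommGroup F] [NormedSpace 𝕜 F]
    [DecidableEq ι] {g : E → F} {A : ι → E} {i : ι} (hg : DifferentiableAt 𝕜 g (A i))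
    (k : ι) (v : E) :
    fderiv 𝕜 (fun B => g (B i)) A (Pi.single k v) = if i = k then fderiv 𝕜 g (A i) v else 0 := by
  have hcomp : HasFDerivAt (fun B => g (B i)) ((fderiv 𝕜 g (A i)).comp (proj i)) A :=
    hg.hasFDerivAt.comp A (hasFDerivAt_apply i A)
  rw [hcomp.fderiv]
  split_ifs with h <;> simp [h]

theorem matrix_softmax_jacobian_frobenius_le (N : ℕ) (A : Fin N → Fin N → ℝ) :
    Real.sqrt (∑ i, ∑ j, ∑ k, ∑ l,
        (fderiv ℝ (fun B : Fin N → Fin N → ℝ => matrixSoftmax B i j) A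
            (Pi.single k (Pi.single l 1))) ^ 2)
      ≤ 2 * Real.sqrt N := by
  have hblock : ∀ i j, ∑ k, ∑ l,
      (fderiv ℝ (fun B : Fin N → Fin N → ℝ => matrixSoftmax B i j) A
        (Pi.single k (Pi.single l 1))) ^ 2 =
      ∑ l, softmaxJacobian (softmax (A i)) j l ^ 2 := by
    intro i j
    have : Nonempty (Fin N) := ⟨i⟩
    simp only [matrixSoftmax_apply, fderiv_comp_eval_apply_single
      (hasFDerivAt_softmax_apply (A i) j).differentiableAt, fderiv_softmax_apply_single, ite_pow, ne_eq, OfNat.ofNat_ne_zero, not_false_eq_true, zero_pow, sum_ite_irrel,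
      sum_const_zero, sum_ite_eq, mem_univ, if_true]
  have hsum : ∑ i, ∑ j, ∑ k, ∑ l,
      (fderiv ℝ (fun B : Fin N → Fin N → ℝ => matrixSoftmax B i j) A
        (Pi.single k (Pi.single l 1))) ^ 2 ≤ 4 * N := by
    simp only [hblock]
    calc _ ≤ ∑ _ : Fin N, (2 : ℝ) := sum_le_sum fun i _ =>
          have : Nonempty (Fin N) := ⟨i⟩
          sum_sq_softmaxJacobian_le_two (softmax_nonneg (A i)) (sum_softmax (A i))
      _ ≤ 4 * N := by
          rw [sum_const, card_univ, Fintype.card_fin, nsmul_eq_mul]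
          linarith [N.cast_nonneg (α := ℝ)]
  calc _ ≤ Real.sqrt (2 ^ 2 * N) := Real.sqrt_le_sqrt (by linarith)
    _ = 2 * Real.sqrt N := by rw [Real.sqrt_mul (by positivity), Real.sqrt_sq zero_le_two]
end

section
/- Let X ∈ ℝ^{N×D}, Q, K ∈ ℝ^{D×d} have mutually independent mean-zero Gaussian entries with X_{ij} ~ N(0,σ_x²) and Q_{ij}, K_{ij} ~ N(0,σ_w²). Then the expected squared Frobenius norm of the gradient of XQKᵀXᵀ with respect to Q satisfies E[∑_{i,j} ‖x_i x_jᵀ K‖_F²] = N D d · 3σ_x⁴σ_w² + N(N−1)D(D−1)d σ_x⁴ σ_w² + (lower order cross terms), and in particular is bounded above by C · N² D² d σ_x⁴ σ_w² for an absolute constant C. -/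
/-!
Write an entry of the gradient as `X i k * ∑ m, X j m * K m l = ∑ m, a m` with
`a m = X i k * X j m * K m l`. For `m ≠ m'` the factor `K m l` of `a m * a m'` is independent of
all the other factors and has mean zero, so the `a m` are orthogonal in `L²` and
`𝔼 (∑ m, a m)² = ∑ m, 𝔼 (a m)²`. Each `𝔼 (a m)² = 𝔼 (K m l)² * 𝔼 (X i k² * X j m²)` is at most
`σw² * 𝔼 X⁴ = 3 σx⁴ σw²` by AM-GM, and there are `N² D d` entries of `D` summands each.
-/

open MeasureTheory ProbabilityTheory Real Set
open scoped NNReal ENNReal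

lemma integral_pow_four_gaussianReal_one : ∫ x, x ^ 4 ∂gaussianReal 0 1 = 3 := by
  have hΓ : Gamma (5 / 2) = 3 / 4 * √π := by
    rw [show (5 / 2 : ℝ) = 3 / 2 + 1 by norm_num, Gamma_add_one (by norm_num),
      show (3 / 2 : ℝ) = 1 / 2 + 1 by norm_num, Gamma_add_one (by norm_num), Gamma_one_half_eq]
    ring
  have hhalf : ∫ x in Ioi (0 : ℝ), x ^ (4 : ℝ) * exp (-(1 / 2) * x ^ (2 : ℝ))
      = 3 / 2 * √(2 * π) := by
    rw [integral_rpow_mul_exp_neg_mul_rpow (by norm_num) (by norm_num) (by norm_num),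
      show ((4 : ℝ) + 1) / 2 = 5 / 2 by norm_num, hΓ,
      show -((4 : ℝ) + 1) / 2 = -(2 + 1 / 2) by norm_num,
      rpow_neg (by norm_num), rpow_add (by norm_num), ← sqrt_eq_rpow, sqrt_mul (by norm_num)]
    norm_num
    field_simp
  have hpdf : ∀ x : ℝ, gaussianPDFReal 0 1 x • x ^ 4
      = (√(2 * π))⁻¹ * (|x| ^ (4 : ℝ) * exp (-(1 / 2) * |x| ^ (2 : ℝ))) := by
    intro x
    simp only [gaussianPDFReal, smul_eq_mul, NNReal.coe_one, mul_one, sub_zero]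
    norm_cast
    rw [sq_abs, pow_abs, abs_of_nonneg (by positivity : (0:ℝ) ≤ x ^ 4)]
    ring_nf
  simp_rw [integral_gaussianReal_eq_integral_smul one_ne_zero, hpdf]
  rw [integral_const_mul,
    integral_comp_abs (f := fun x => x ^ (4 : ℝ) * exp (-(1 / 2) * x ^ (2 : ℝ))), hhalf]
  field_simp

lemma integral_pow_four_gaussianReal (v : ℝ≥0) : ∫ x, x ^ 4 ∂gaussianReal 0 v = 3 * v ^ 2 := by
  have h := gaussianReal_map_const_mul (μ := 0) (v := 1) √v
  rw [mul_zero, mul_one, show NNReal.mk (√v ^ 2) (sq_nonneg _) = v by ext; simp] at h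
  rw [← h, integral_map (by fun_prop) (by fun_prop)]
  simp_rw [mul_pow]
  rw [integral_const_mul, integral_pow_four_gaussianReal_one,
    show √(v : ℝ) ^ 4 = (√(v : ℝ) ^ 2) ^ 2 by ring, Real.sq_sqrt v.coe_nonneg]
  ring

variable {Ω : Type*} {mΩ : MeasurableSpace Ω} {μ : Measure Ω}

section GaussianLaw

variable {Y : Ω → ℝ} {c : ℝ} {v : ℝ≥0}

namespace ProbabilityTheory.HasLaw

lemma memLp_of_gaussianReal (hY : HasLaw Y (gaussianReal c v) μ) {p : ℝ≥0∞} (hp : p ≠ ∞) :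
    MemLp Y p μ := by
  have h := memLp_id_gaussianReal' (μ := c) (v := v) p hp
  rw [← hY.map_eq] at h
  exact (memLp_map_measure_iff (by rw [hY.map_eq]; fun_prop) hY.aemeasurable).1 h

lemma integrable_pow_of_gaussianReal (hY : HasLaw Y (gaussianReal c v) μ) {n : ℕ} (hn : n ≠ 0) :
    Integrable (fun ω => Y ω ^ n) μ := by
  refine (integrable_norm_iff (hY.aemeasurable.pow_const n).aestronglyMeasurable).1 ?_
  simpa only [norm_pow] using
    (hY.memLp_of_gaussianReal (ENNReal.natCast_ne_top n)).integrable_norm_pow hn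

lemma integral_of_gaussianReal (hY : HasLaw Y (gaussianReal c v) μ) : ∫ ω, Y ω ∂μ = c := by
  rw [← integral_id_gaussianReal (μ := c) (v := v), ← hY.integral_eq]

lemma integral_sq_of_gaussianReal (hY : HasLaw Y (gaussianReal 0 v) μ) :
    ∫ ω, Y ω ^ 2 ∂μ = v := by
  rw [← variance_of_integral_eq_zero hY.aemeasurable hY.integral_of_gaussianReal, hY.variance_eq,
    variance_id_gaussianReal]

lemma integral_pow_four_of_gaussianReal (hY : HasLaw Y (gaussianReal 0 v) μ) :
    ∫ ω, Y ω ^ 4 ∂μ = 3 * v ^ 2 := by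
  rw [← integral_pow_four_gaussianReal, ← hY.integral_comp (by fun_prop)]
  rfl

end ProbabilityTheory.HasLaw

end GaussianLaw

lemma ProbabilityTheory.iIndepFun.indepFun_of_measurable_iSup_ne {ι β γ : Type*}
    {mβ : MeasurableSpace β} {mγ : MeasurableSpace γ} {F : ι → Ω → β}
    (hF : ∀ j, Measurable (F j)) (h : iIndepFun F μ) (i : ι) {g : Ω → γ}
    (hg : Measurable[⨆ (j) (_ : j ≠ i), mβ.comap (F j)] g) : IndepFun (F i) g μ := by
  have := indep_iSup_of_disjoint (fun j => (hF j).comap_le) h.iIndep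
    (disjoint_singleton_left.2 (notMem_compl_iff.2 (mem_singleton i)))
  rw [IndepFun_iff_Indep]
  refine indep_of_indep_of_le_right (indep_of_indep_of_le_left this ?_) hg.comap_le
  exact le_iSup₂ (f := fun j (_ : j ∈ ({i} : Set ι)) => mβ.comap (F j)) i rfl

lemma measurable_iSup_ne_comap {ι β : Type*} {mβ : MeasurableSpace β} {F : ι → Ω → β}
    {i j : ι} (hji : j ≠ i) : Measurable[⨆ (k) (_ : k ≠ i), mβ.comap (F k)] (F j) :=
  Measurable.of_comap_le (le_iSup₂ (f := fun k (_ : k ≠ i) => mβ.comap (F k)) j hji)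

lemma integral_sq_sum_of_integral_mul_eq_zero {ι : Type*} (s : Finset ι) {a : ι → Ω → ℝ}
    (ha : ∀ n ∈ s, MemLp (a n) 2 μ)
    (horth : ∀ n ∈ s, ∀ n' ∈ s, n ≠ n' → ∫ ω, a n ω * a n' ω ∂μ = 0) :
    ∫ ω, (∑ n ∈ s, a n ω) ^ 2 ∂μ = ∑ n ∈ s, ∫ ω, a n ω ^ 2 ∂μ := by
  simp_rw [sq, Finset.sum_mul_sum]
  have hint : ∀ n ∈ s, ∀ n' ∈ s, Integrable (fun ω => a n ω * a n' ω) μ :=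
    fun n hn n' hn' => (ha n hn).integrable_mul (ha n' hn')
  rw [integral_finsetSum _ fun n hn => integrable_finsetSum _ (hint n hn)]
  refine Finset.sum_congr rfl fun n hn => ?_
  rw [integral_finsetSum _ (hint n hn),
    Finset.sum_eq_single_of_mem n hn fun n' hn' hne => horth n hn n' hn' hne.symm]

lemma sq_mul_sq_le_add_pow_four_div_two (a b : ℝ) : a ^ 2 * b ^ 2 ≤ (a ^ 4 + b ^ 4) / 2 := by
  nlinarith [two_mul_le_add_sq (a ^ 2) (b ^ 2)]

lemma integrable_sq_mul_sq {f g : Ω → ℝ} (hf : AEStronglyMeasurable f μ)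
    (hg : AEStronglyMeasurable g μ) (hf4 : Integrable (fun ω => f ω ^ 4) μ)
    (hg4 : Integrable (fun ω => g ω ^ 4) μ) :
    Integrable (fun ω => f ω ^ 2 * g ω ^ 2) μ := by
  refine ((hf4.add hg4).div_const 2).mono' (by fun_prop) (.of_forall fun ω => ?_)
  rw [norm_of_nonneg (by positivity)]
  exact sq_mul_sq_le_add_pow_four_div_two (f ω) (g ω)

lemma integral_sq_mul_sq_le {f g : Ω → ℝ} (hf : AEStronglyMeasurable f μ)
    (hg : AEStronglyMeasurable g μ) (hf4 : Integrable (fun ω => f ω ^ 4) μ)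
    (hg4 : Integrable (fun ω => g ω ^ 4) μ) :
    ∫ ω, f ω ^ 2 * g ω ^ 2 ∂μ ≤ (∫ ω, f ω ^ 4 ∂μ + ∫ ω, g ω ^ 4 ∂μ) / 2 := by
  rw [← integral_add hf4 hg4, ← integral_div]
  exact integral_mono (integrable_sq_mul_sq hf hg hf4 hg4) ((hf4.add hg4).div_const 2)
    fun ω => sq_mul_sq_le_add_pow_four_div_two (f ω) (g ω)

lemma integral_finsetSum_le_card_mul {ι : Type*} (s : Finset ι) {f : ι → Ω → ℝ} {B : ℝ}
    (h : ∀ i ∈ s, Integrable (f i) μ ∧ ∫ ω, f i ω ∂μ ≤ B) :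
    Integrable (fun ω => ∑ i ∈ s, f i ω) μ ∧ ∫ ω, ∑ i ∈ s, f i ω ∂μ ≤ s.card * B := by
  refine ⟨integrable_finsetSum _ fun i hi => (h i hi).1, ?_⟩
  rw [integral_finsetSum _ fun i hi => (h i hi).1]
  simpa using Finset.sum_le_card_nsmul s _ B fun i hi => (h i hi).2

section Attention

variable {N D d : ℕ} {X : Fin N → Fin D → Ω → ℝ} {K : Fin D → Fin d → Ω → ℝ}

def attentionEntries (X : Fin N → Fin D → Ω → ℝ) (K : Fin D → Fin d → Ω → ℝ) :
    (Fin N × Fin D) ⊕ (Fin D × Fin d) → Ω → ℝ :=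
  Sum.elim (fun p => X p.1 p.2) (fun p => K p.1 p.2)

lemma measurable_attentionEntries (hX : ∀ i k, Measurable (X i k))
    (hK : ∀ m l, Measurable (K m l)) : ∀ e, Measurable (attentionEntries X K e)
  | .inl p => hX p.1 p.2
  | .inr p => hK p.1 p.2

lemma integral_attention_summand_mul_eq_zero (hX : ∀ i k, Measurable (X i k))
    (hK : ∀ m l, Measurable (K m l)) (hind : iIndepFun (attentionEntries X K) μ)
    (i j : Fin N) (k : Fin D) {m m' : Fin D} (l : Fin d) (hmean : ∫ ω, K m l ω ∂μ = 0)
    (hmm' : m ≠ m') :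
    ∫ ω, (X i k ω * X j m ω * K m l ω) * (X i k ω * X j m' ω * K m' l ω) ∂μ = 0 := by
  let 𝓖 := ⨆ (e) (_ : e ≠ .inr (m, l)), MeasurableSpace.comap (attentionEntries X K e) inferInstance
  have hXG : ∀ i k, Measurable[𝓖] (X i k) := fun i k =>
    measurable_iSup_ne_comap (F := attentionEntries X K) (j := .inl (i, k)) Sum.inl_ne_inr
  have hKG : Measurable[𝓖] (K m' l) :=
    measurable_iSup_ne_comap (F := attentionEntries X K) (j := .inr (m', l))
      (by simpa using hmm'.symm)
  have hindep : IndepFun (K m l) (fun ω => X i k ω ^ 2 * X j m ω * X j m' ω * K m' l ω) μ :=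
    hind.indepFun_of_measurable_iSup_ne (measurable_attentionEntries hX hK) (.inr (m, l))
      ((((hXG i k).pow_const 2).mul (hXG j m)).mul (hXG j m') |>.mul hKG)
  calc _ = ∫ ω, K m l ω * (X i k ω ^ 2 * X j m ω * X j m' ω * K m' l ω) ∂μ := by
        congr 1; ext ω; ring
    _ = 0 := by
        rw [hindep.integral_fun_mul_eq_mul_integral (hK m l).aestronglyMeasurable (by fun_prop),
          hmean, zero_mul]

lemma integrable_and_integral_attention_summand_sq_le (hX : ∀ i k, Measurable (X i k))
    (hK : ∀ m l, Measurable (K m l)) (hind : iIndepFun (attentionEntries X K) μ) {vx vw : ℝ≥0}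
    (hXlaw : ∀ i k, HasLaw (X i k) (gaussianReal 0 vx) μ)
    (hKlaw : ∀ m l, HasLaw (K m l) (gaussianReal 0 vw) μ) (i j : Fin N) (k m : Fin D) (l : Fin d) :
    Integrable (fun ω => (X i k ω * X j m ω * K m l ω) ^ 2) μ ∧
      ∫ ω, (X i k ω * X j m ω * K m l ω) ^ 2 ∂μ ≤ 3 * vx ^ 2 * vw := by
  let 𝓖 := ⨆ (e) (_ : e ≠ .inr (m, l)), MeasurableSpace.comap (attentionEntries X K e) inferInstance
  have hXG : ∀ i k, Measurable[𝓖] (X i k) := fun i k =>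
    measurable_iSup_ne_comap (F := attentionEntries X K) (j := .inl (i, k)) Sum.inl_ne_inr
  have hindep : IndepFun (fun ω => K m l ω ^ 2) (fun ω => X i k ω ^ 2 * X j m ω ^ 2) μ :=
    (hind.indepFun_of_measurable_iSup_ne (measurable_attentionEntries hX hK) (.inr (m, l))
      (((hXG i k).pow_const 2).mul ((hXG j m).pow_const 2))).comp (measurable_id.pow_const 2)
      measurable_id
  have hX4 : ∀ i k, Integrable (fun ω => X i k ω ^ 4) μ := fun i k =>
    (hXlaw i k).integrable_pow_of_gaussianReal four_ne_zero
  have hsq : (fun ω => (X i k ω * X j m ω * K m l ω) ^ 2)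
      = fun ω => K m l ω ^ 2 * (X i k ω ^ 2 * X j m ω ^ 2) := by
    ext ω; ring
  rw [hsq]
  refine ⟨hindep.integrable_mul ((hKlaw m l).integrable_pow_of_gaussianReal two_ne_zero)
    (integrable_sq_mul_sq (by fun_prop) (by fun_prop) (hX4 i k) (hX4 j m)), ?_⟩
  rw [hindep.integral_fun_mul_eq_mul_integral (by fun_prop) (by fun_prop),
    (hKlaw m l).integral_sq_of_gaussianReal]
  calc (vw : ℝ) * ∫ ω, X i k ω ^ 2 * X j m ω ^ 2 ∂μ
      ≤ vw * ((∫ ω, X i k ω ^ 4 ∂μ + ∫ ω, X j m ω ^ 4 ∂μ) / 2) :=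
        mul_le_mul_of_nonneg_left
          (integral_sq_mul_sq_le (by fun_prop) (by fun_prop) (hX4 i k) (hX4 j m)) vw.2
    _ = 3 * vx ^ 2 * vw := by
        rw [(hXlaw i k).integral_pow_four_of_gaussianReal,
          (hXlaw j m).integral_pow_four_of_gaussianReal]
        ring

lemma integrable_and_integral_sq_attention_entry_le (hX : ∀ i k, Measurable (X i k))
    (hK : ∀ m l, Measurable (K m l)) (hind : iIndepFun (attentionEntries X K) μ) {vx vw : ℝ≥0}
    (hXlaw : ∀ i k, HasLaw (X i k) (gaussianReal 0 vx) μ)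
    (hKlaw : ∀ m l, HasLaw (K m l) (gaussianReal 0 vw) μ) (i j : Fin N) (k : Fin D) (l : Fin d) :
    Integrable (fun ω => (X i k ω * ∑ m, X j m ω * K m l ω) ^ 2) μ ∧
      ∫ ω, (X i k ω * ∑ m, X j m ω * K m l ω) ^ 2 ∂μ ≤ D * (3 * vx ^ 2 * vw) := by
  have hsummand := integrable_and_integral_attention_summand_sq_le hX hK hind hXlaw hKlaw i j k
  have hL2 : ∀ m, MemLp (fun ω => X i k ω * X j m ω * K m l ω) 2 μ := fun m =>
    (memLp_two_iff_integrable_sq (by fun_prop)).2 (hsummand m l).1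
  have hexpand : ∀ ω, X i k ω * ∑ m, X j m ω * K m l ω = ∑ m, X i k ω * X j m ω * K m l ω :=
    fun ω => by simp_rw [Finset.mul_sum, mul_assoc]
  simp_rw [hexpand]
  refine ⟨(memLp_finsetSum _ fun m _ => hL2 m).integrable_sq, ?_⟩
  rw [integral_sq_sum_of_integral_mul_eq_zero _ (fun m _ => hL2 m) fun m _ m' _ hmm' =>
    integral_attention_summand_mul_eq_zero hX hK hind i j k l
      (hKlaw m l).integral_of_gaussianReal hmm']
  simpa using Finset.sum_le_card_nsmul Finset.univ _ _ fun m _ => (hsummand m l).2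

end Attention

theorem expectation_grad_attention_frobenius_bound :
    ∃ C : ℝ, ∀ (N D d : ℕ) (Ω : Type) (_ : MeasureSpace Ω)
      (_ : IsProbabilityMeasure (ℙ : Measure Ω))
      (σx σw : ℝ≥0) (X : Fin N → Fin D → Ω → ℝ) (K : Fin D → Fin d → Ω → ℝ),
      (∀ i k, Measurable (X i k)) → (∀ i j, Measurable (K i j)) →
      iIndepFun
        (Sum.elim (fun p : Fin N × Fin D => X p.1 p.2)
          (fun p : Fin D × Fin d => K p.1 p.2)) ℙ →
      (∀ i k, Measure.map (X i k) ℙ = gaussianReal 0 (σx ^ 2)) →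
      (∀ i j, Measure.map (K i j) ℙ = gaussianReal 0 (σw ^ 2)) →
      ∫ ω, (∑ i, ∑ j, ∑ k, ∑ l, (X i k ω * ∑ m, X j m ω * K m l ω) ^ 2) ∂ℙ
        ≤ C * N ^ 2 * D ^ 2 * d * (σx : ℝ) ^ 4 * (σw : ℝ) ^ 2 := by
  refine ⟨3, fun N D d Ω _ _ σx σw X K hX hK hind hXlaw hKlaw => ?_⟩
  have hentry := integrable_and_integral_sq_attention_entry_le hX hK hind
    (fun i k => ⟨(hX i k).aemeasurable, hXlaw i k⟩) (fun m l => ⟨(hK m l).aemeasurable, hKlaw m l⟩)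
  have hsum := integral_finsetSum_le_card_mul .univ fun i _ =>
    integral_finsetSum_le_card_mul .univ fun j _ => integral_finsetSum_le_card_mul .univ
      fun k _ => integral_finsetSum_le_card_mul .univ fun l _ => hentry i j k l
  refine hsum.2.trans (le_of_eq ?_)
  simp only [Finset.card_univ, Fintype.card_fin]
  push_cast
  ring
end
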